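/- Let G be a finite simple graph of order n with minimum degree δ(G) ≥ k−1 ≥ 2, where k ≥ 3 is an integer. If d_{×k}(G) ≥ 2, then γ_{×k}(G) + d_{×k}(G) ≤ n/2 + 2. -/

import Mathlib

variable {V : Type*}

/-- `S` is a `k`-tuple dominating set of `G`: every vertex outside `S` has at least `k`
neighbors in `S`, and every vertex of `S` has at least `k - 1` neighbors in `S`. -/
def IsKTupleDomSet (G : SimpleGraph V) (k : ℕ) (S : Set V) : Prop :=
  (∀ v ∉ S, k ≤ (S ∩ G.neighborSet v).ncard) ∧
  (∀ v ∈ S, k - 1 ≤ (S ∩ G.neighborSet v).ncard)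

/-- A partition of the vertex set of `G` into `k`-tuple dominating sets. -/
def IsKDomaticPartition (G : SimpleGraph V) (k : ℕ) (P : Set (Set V)) : Prop :=
  Setoid.IsPartition P ∧ ∀ S ∈ P, IsKTupleDomSet G k S

/-- The `k`-tuple domination number: minimum cardinality of a `k`-tuple dominating set. -/
noncomputable def kDomNum (G : SimpleGraph V) (k : ℕ) : ℕ :=
  sInf {m | ∃ S : Set V, IsKTupleDomSet G k S ∧ S.ncard = m}

/-- The `k`-tuple domatic number: the largest number of sets in a partition of the
vertex set into `k`-tuple dominating sets. -/
noncomputable def kDomaticNum (G : SimpleGraph V) (k : ℕ) : ℕ :=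
  sSup {d | ∃ P : Set (Set V), IsKDomaticPartition G k P ∧ P.ncard = d}

/-- Any `k`-tuple dominating set has at least `k` elements (for `k ≥ 1`, nonempty `V`). -/
lemma ncard_ge_of_isKTupleDomSet [Fintype V] [Nonempty V] (G : SimpleGraph V) (k : ℕ)
    (hk : 1 ≤ k) {S : Set V} (h : IsKTupleDomSet G k S) : k ≤ S.ncard := by
  have hSne : S.Nonempty := by
    by_contra hne
    rw [Set.not_nonempty_iff_eq_empty] at hne
    subst hne
    have := h.1 (Classical.arbitrary V) (Set.notMem_empty _)
    simp at this
    omega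
  obtain ⟨v, hv⟩ := hSne
  have h2 := h.2 v hv
  have hsub : S ∩ G.neighborSet v ⊆ S \ {v} := by
    intro x hx
    refine ⟨hx.1, ?_⟩
    simp only [Set.mem_singleton_iff]
    rintro rfl
    exact G.irrefl hx.2
  have hle : (S ∩ G.neighborSet v).ncard ≤ (S \ {v}).ncard :=
    Set.ncard_le_ncard hsub (Set.toFinite _)
  have hdiff : (S \ {v}).ncard = S.ncard - 1 :=
    Set.ncard_diff_singleton_of_mem hv
  have hpos : 0 < S.ncard := (Set.ncard_pos (Set.toFinite _)).mpr ⟨v, hv⟩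
  omega

/-- Sum of cardinalities of pairwise disjoint sets equals the cardinality of their union. -/
lemma sum_ncard_sUnion [Fintype V] (Q : Finset (Set V))
    (h : (↑Q : Set (Set V)).PairwiseDisjoint id) :
    ∑ S ∈ Q, S.ncard = (⋃₀ (↑Q : Set (Set V))).ncard := by
  classical
  induction Q using Finset.induction with
  | empty => simp
  | @insert S Q hSQ ih =>
    have hsub : (↑Q : Set (Set V)) ⊆ ↑(insert S Q) := by
      simp only [Finset.coe_insert]; exact Set.subset_insert _ _
    have hdisj : Disjoint S (⋃₀ (↑Q : Set (Set V))) := by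
      rw [Set.disjoint_sUnion_right]
      intro T hT
      have hST : S ≠ T := by rintro rfl; exact hSQ hT
      exact h (by simp) (hsub hT) hST
    rw [Finset.sum_insert hSQ, Finset.coe_insert, Set.sUnion_insert,
      Set.ncard_union_eq hdisj (Set.toFinite _) (Set.toFinite _), ih (h.subset hsub)]

/-- Let `G` be a graph of order `n` with minimum degree `δ(G) ≥ k - 1 ≥ 2`, where
`k ≥ 3`. If `d_{×k}(G) ≥ 2`, then `γ_{×k}(G) + d_{×k}(G) ≤ n / 2 + 2`. -/
theorem kDomNum_add_kDomaticNum_le_of_two_le [Fintype V] [Nonempty V] [DecidableEq V]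
    (G : SimpleGraph V) [DecidableRel G.Adj] (k : ℕ) (hk : 3 ≤ k)
    (hδ : k - 1 ≤ G.minDegree) (hd : 2 ≤ kDomaticNum G k) :
    (kDomNum G k : ℝ) + (kDomaticNum G k : ℝ) ≤ (Fintype.card V : ℝ) / 2 + 2 := by
  classical
  set 𝒟 : Set ℕ := {d | ∃ P : Set (Set V), IsKDomaticPartition G k P ∧ P.ncard = d} with h𝒟
  have hbdd : BddAbove 𝒟 := by
    refine ⟨Nat.card (Set V), ?_⟩
    rintro d ⟨P, _, rfl⟩
    calc P.ncard ≤ (Set.univ : Set (Set V)).ncard :=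
          Set.ncard_le_ncard (Set.subset_univ _) Set.finite_univ
      _ = Nat.card (Set V) := Set.ncard_univ _
  have hne : 𝒟.Nonempty := by
    by_contra hne
    rw [Set.not_nonempty_iff_eq_empty] at hne
    have : kDomaticNum G k = 0 := by
      rw [kDomaticNum, ← h𝒟, hne, csSup_empty]; rfl
    omega
  have hmem : kDomaticNum G k ∈ 𝒟 := Nat.sSup_mem hne hbdd
  obtain ⟨P, ⟨hpart, hdom⟩, hPcard⟩ := hmem
  -- P is nonempty, so a k-tuple dominating set exists
  have hPne : P.Nonempty := by
    have : 0 < P.ncard := by omega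
    exact (Set.ncard_pos (Set.toFinite _)).mp this
  obtain ⟨S₀, hS₀⟩ := hPne
  have hγset : {m | ∃ S : Set V, IsKTupleDomSet G k S ∧ S.ncard = m}.Nonempty :=
    ⟨S₀.ncard, S₀, hdom S₀ hS₀, rfl⟩
  have hγmem := Nat.sInf_mem hγset
  obtain ⟨Sγ, hSγdom, hSγcard⟩ := hγmem
  have hγk : k ≤ kDomNum G k := by
    rw [kDomNum, ← hSγcard]
    exact ncard_ge_of_isKTupleDomSet G k (by omega) hSγdom
  -- each set in P has at least γ elements
  have hγle : ∀ S ∈ P, kDomNum G k ≤ S.ncard := fun S hS =>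
    Nat.sInf_le ⟨S, hdom S hS, rfl⟩
  -- counting
  have hPfin : P.Finite := Set.toFinite P
  set Q : Finset (Set V) := hPfin.toFinset with hQ
  have hQcoe : (↑Q : Set (Set V)) = P := hPfin.coe_toFinset
  have hQcard : Q.card = kDomaticNum G k := by
    rw [← hPcard]; exact (Set.ncard_eq_toFinset_card P hPfin).symm
  have hsum : ∑ S ∈ Q, S.ncard = Fintype.card V := by
    rw [sum_ncard_sUnion Q (hQcoe ▸ hpart.pairwiseDisjoint), hQcoe,
      hpart.sUnion_eq_univ, Set.ncard_univ, Nat.card_eq_fintype_card]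
  have hlow : Q.card * kDomNum G k ≤ ∑ S ∈ Q, S.ncard := by
    calc Q.card * kDomNum G k = Q.card • kDomNum G k := by rw [smul_eq_mul]
      _ ≤ ∑ S ∈ Q, S.ncard :=
        Finset.card_nsmul_le_sum Q _ _ (fun S hS => hγle S (hQcoe ▸ Finset.mem_coe.mpr hS))
  have hmul : kDomaticNum G k * kDomNum G k ≤ Fintype.card V := by
    rw [← hQcard, ← hsum]; exact hlow
  -- final real arithmetic
  have h1 : (3 : ℝ) ≤ (kDomNum G k : ℝ) := by exact_mod_cast le_trans hk hγk
  have h2 : (2 : ℝ) ≤ (kDomaticNum G k : ℝ) := by exact_mod_cast hd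
  have h3 : (kDomaticNum G k : ℝ) * (kDomNum G k : ℝ) ≤ (Fintype.card V : ℝ) := by
    exact_mod_cast hmul
  nlinarith [mul_nonneg (by linarith : (0:ℝ) ≤ (kDomNum G k : ℝ) - 2)
    (by linarith : (0:ℝ) ≤ (kDomaticNum G k : ℝ) - 2)]
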